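/- Let G be a group with a (K,C)-quasi-action A on a simplicial tree T, and suppose G is boundedly generated by elements g₁, …, g_n, i.e. every g ∈ G can be written g = g₁^{α₁}·g₂^{α₂}···g_n^{α_n} for some integers α₁,…,α_n. If there is x ∈ T such that for each i the set {A(g_i^m, x) : m ∈ ℤ} has finite diameter, then the orbit {A(g, x) : g ∈ G} has finite diameter. -/
import Mathlib


/-- for a quasi-action on a simplicial tree of a group boundedly generated by
elements g₁,…,g_n each of which has bounded orbit, the whole orbit is bounded. -/
theorem stmt_10 (G : Type) [Group G]
    (V : Type) (T : SimpleGraph V) (hT : T.IsTree)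
    (K C : ℝ) (hK : 1 ≤ K) (hC : 0 ≤ C)
    (A : G → V → V)
    -- each A(g,−) is a (K,C)-quasi-isometry of the tree
    (hQI : ∀ g : G,
      (∀ u v : V, (T.dist u v : ℝ) / K - C ≤ (T.dist (A g u) (A g v) : ℝ) ∧
        (T.dist (A g u) (A g v) : ℝ) ≤ K * (T.dist u v : ℝ) + C) ∧
      ∀ v : V, ∃ u : V, (T.dist v (A g u) : ℝ) ≤ C)
    -- quasi-action cocycle condition
    (hcoc : ∀ g h : G, ∀ u : V, (T.dist (A g (A h u)) (A (g * h) u) : ℝ) ≤ C)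
    -- G is boundedly generated by g₁,…,g_n
    (n : ℕ) (g : Fin n → G)
    (hbg : ∀ h : G, ∃ α : Fin n → ℤ, h = (List.ofFn (fun i => g i ^ α i)).prod)
    (x : V)
    -- each gᵢ has bounded orbit
    (hell : ∀ i : Fin n, ∃ D : ℝ, ∀ m m' : ℤ,
      (T.dist (A (g i ^ m) x) (A (g i ^ m') x) : ℝ) ≤ D) :
    -- the G-orbit of x has finite diameter
    ∃ D : ℝ, ∀ a b : G, (T.dist (A a x) (A b x) : ℝ) ≤ D := by
  have hconn := hT.isConnected
  have tri : ∀ u v w : V, (T.dist u w : ℝ) ≤ T.dist u v + T.dist v w := by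
    intro u v w
    exact_mod_cast hconn.dist_triangle
  have symm : ∀ u v : V, (T.dist u v : ℝ) = T.dist v u := by
    intro u v; rw [SimpleGraph.dist_comm]
  have hK0 : (0:ℝ) < K := lt_of_lt_of_le one_pos hK
  -- d(A 1 x, x) ≤ 2KC
  have h1 : (T.dist (A 1 x) x : ℝ) ≤ 2 * K * C := by
    have hc := hcoc 1 1 x
    rw [one_mul] at hc
    have hl := ((hQI 1).1 x (A 1 x)).1
    have hc' : (T.dist (A 1 x) (A 1 (A 1 x)) : ℝ) ≤ C := by
      rw [symm]; exact hc
    have hs := symm (A 1 x) x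
    have hd : (T.dist x (A 1 x) : ℝ) / K ≤ 2 * C := by linarith
    rw [div_le_iff₀ hK0] at hd
    nlinarith
  have key : ∀ (m : ℕ) (f : Fin m → G),
      (∀ i, ∃ D : ℝ, ∀ a b : ℤ, (T.dist (A (f i ^ a) x) (A (f i ^ b) x) : ℝ) ≤ D) →
      ∃ B : ℝ, ∀ α : Fin m → ℤ,
        (T.dist (A ((List.ofFn fun i => f i ^ α i).prod) x) x : ℝ) ≤ B := by
    intro m
    induction m with
    | zero =>
      intro f _
      refine ⟨2 * K * C, fun α => ?_⟩
      simpa using h1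
    | succ m ih =>
      intro f hf
      obtain ⟨B, hB⟩ := ih (fun i => f i.succ) (fun i => hf i.succ)
      obtain ⟨D0, hD0⟩ := hf 0
      refine ⟨C + (K * B + C) + (D0 + 2 * K * C), fun α => ?_⟩
      rw [List.ofFn_succ, List.prod_cons]
      set h2 := (List.ofFn fun i => f i.succ ^ α i.succ).prod with hh2
      have e1 : (T.dist (A (f 0 ^ α 0 * h2) x) (A (f 0 ^ α 0) (A h2 x)) : ℝ) ≤ C := by
        rw [symm]; exact hcoc _ _ x
      have hBx : (T.dist (A h2 x) x : ℝ) ≤ B := hB (fun i => α i.succ)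
      have e2 : (T.dist (A (f 0 ^ α 0) (A h2 x)) (A (f 0 ^ α 0) x) : ℝ) ≤ K * B + C := by
        have h := ((hQI (f 0 ^ α 0)).1 (A h2 x) x).2
        nlinarith
      have e3 : (T.dist (A (f 0 ^ α 0) x) x : ℝ) ≤ D0 + 2 * K * C := by
        have hd := hD0 (α 0) 0
        rw [zpow_zero] at hd
        have ht := tri (A (f 0 ^ α 0) x) (A 1 x) x
        linarith
      have t1 := tri (A (f 0 ^ α 0 * h2) x) (A (f 0 ^ α 0) (A h2 x)) x
      have t2 := tri (A (f 0 ^ α 0) (A h2 x)) (A (f 0 ^ α 0) x) x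
      linarith
  obtain ⟨B, hB⟩ := key n g hell
  refine ⟨B + B, fun a b => ?_⟩
  obtain ⟨α, hα⟩ := hbg a
  obtain ⟨β, hβ⟩ := hbg b
  have ha : (T.dist (A a x) x : ℝ) ≤ B := by rw [hα]; exact hB α
  have hb : (T.dist (A b x) x : ℝ) ≤ B := by rw [hβ]; exact hB β
  have t := tri (A a x) x (A b x)
  have hs := symm x (A b x)
  linarith
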